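/- arXiv:1406.4470 — 3 statements merged into one kernel-verified Lean document; each statement's English description precedes it below -/
import Mathlib

section
/- Let N be a prime number and a ∈ ℤ^N. The vectors a, rot(a), ..., rot^{N-1}(a) are linearly independent if and only if a(x) = Σ_{n=0}^{N-1} a_n x^n is not divisible by x − 1 and not divisible by 1 + x + ... + x^{N-1} (in ℚ[x]). -/
/-!
Identify `K^N` with `K[X]/(X^N - 1)` through the basis `1, r, …, r^(N-1)` of powers of the
root `r`. The cyclic shift becomes multiplication by `r`, so the rotations of `a` become the
elements `r^k · a(r)`, which are linearly independent exactly when `a(r)` is a unit, i.e. when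
`a(X)` is coprime to `X^N - 1 = (X - 1) Φ_N`. For `N` prime both factors are irreducible over `ℚ`,
and coprimality does not change when scalars are extended from `ℚ` to `ℝ`.
-/

open Polynomial

def rotR {N : ℕ} [NeZero N] (x : Fin N → ℝ) : Fin N → ℝ := fun i => x (i - 1)

namespace AdjoinRoot

theorem isUnit_mk_iff_isCoprime {R : Type*} [CommRing R] {f p : R[X]} :
    IsUnit (mk f p) ↔ IsCoprime p f := by
  constructor
  · intro h
    obtain ⟨y, hy⟩ := isUnit_iff_exists_inv.1 h
    obtain ⟨q, rfl⟩ := mk_surjective y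
    obtain ⟨c, hc⟩ := mk_eq_zero.1 (show mk f (p * q - 1) = 0 by simp [hy])
    exact ⟨q, -c, by linear_combination hc⟩
  · rintro ⟨u, v, huv⟩
    refine IsUnit.of_mul_eq_one (mk f u) ?_
    simpa [mul_comm] using congrArg (mk f) huv

theorem root_X_pow_sub_one_pow {R : Type*} [CommRing R] (N : ℕ) :
    root (X ^ N - 1 : R[X]) ^ N = 1 := by
  have h : mk (X ^ N - 1 : R[X]) (X ^ N - 1) = 0 := mk_self
  rwa [map_sub, map_pow, mk_X, map_one, sub_eq_zero] at h

end AdjoinRoot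

theorem Module.Basis.linearIndependent_mul_iff_isUnit {K R ι : Type*} [Field K] [CommRing R]
    [Algebra K R] [Finite ι] (b : Module.Basis ι K R) (x : R) :
    LinearIndependent K (fun i => b i * x) ↔ IsUnit x := by
  have : Module.Finite K R := .of_basis b
  simp_rw [mul_comm _ x]
  change LinearIndependent K (LinearMap.mulLeft K x ∘ b) ↔ _
  rw [IsUnit.isUnit_iff_mulLeft_bijective]
  refine ⟨fun h => ?_, fun h => b.linearIndependent.map' _ (LinearMap.ker_eq_bot.2 h.1)⟩
  have hinj := LinearMap.injective_of_linearIndependent b.span_eq h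
  exact ⟨hinj, LinearMap.injective_iff_surjective.1 hinj⟩

section CyclicShift

variable {K : Type*} [Field K] {N : ℕ} [NeZero N]

def cyclicShift (x : Fin N → K) : Fin N → K := fun i => x (i - 1)

namespace AdjoinRoot

variable (K N) in
noncomputable def cyclicBasis : Module.Basis (Fin N) K (AdjoinRoot (X ^ N - 1 : K[X])) :=
  (powerBasis' (by simpa using monic_X_pow_sub_C (1 : K) (NeZero.ne N))).basis.reindex
    (finCongr (by simpa using natDegree_X_pow_sub_C (n := N) (r := (1 : K))))

theorem cyclicBasis_apply (i : Fin N) : cyclicBasis K N i = root _ ^ (i : ℕ) := by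
  simp [cyclicBasis]

theorem cyclicBasis_equivFun_symm (v : Fin N → K) :
    (cyclicBasis K N).equivFun.symm v = mk _ (∑ n : Fin N, C (v n) * X ^ (n : ℕ)) := by
  simp [cyclicBasis_apply, Module.Basis.equivFun_symm_apply, Algebra.smul_def]

theorem cyclicBasis_equivFun_symm_cyclicShift (v : Fin N → K) :
    (cyclicBasis K N).equivFun.symm (cyclicShift v) =
      root _ * (cyclicBasis K N).equivFun.symm v := by
  simp only [Module.Basis.equivFun_symm_apply, cyclicBasis_apply, Finset.mul_sum, mul_smul_comm]
  refine Fintype.sum_equiv (Equiv.subRight 1) _ _ fun i => ?_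
  rw [cyclicShift, Equiv.subRight_apply, ← pow_succ',
    pow_eq_pow_mod (_ + 1) (root_X_pow_sub_one_pow N), ← Nat.add_mod_mod, ← Fin.val_one',
    ← Fin.val_add, sub_add_cancel]

end AdjoinRoot

open AdjoinRoot in
theorem linearIndependent_iterate_cyclicShift_iff (v : Fin N → K) :
    LinearIndependent K (fun k : Fin N => cyclicShift^[k] v) ↔
      IsCoprime (∑ n : Fin N, C (v n) * X ^ (n : ℕ)) (X ^ N - 1) := by
  set e := (cyclicBasis K N).equivFun.symm
  have he : ∀ k : ℕ, e (cyclicShift^[k] v) = root _ ^ k * e v := by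
    intro k
    induction k with
    | zero => simp
    | succ k ih =>
      rw [Function.iterate_succ_apply', cyclicBasis_equivFun_symm_cyclicShift, ih, pow_succ',
        mul_assoc]
  rw [← e.toLinearMap.linearIndependent_iff (LinearEquiv.ker _)]
  simp only [Function.comp_def, LinearEquiv.coe_coe, he, ← cyclicBasis_apply]
  rw [(cyclicBasis K N).linearIndependent_mul_iff_isUnit, cyclicBasis_equivFun_symm,
    isUnit_mk_iff_isCoprime]

end CyclicShift

theorem isCoprime_X_pow_sub_one_iff_of_prime {N : ℕ} (hN : N.Prime) (A : ℚ[X]) :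
    IsCoprime A (X ^ N - 1) ↔ ¬ X - 1 ∣ A ∧ ¬ (∑ n ∈ Finset.range N, X ^ n) ∣ A := by
  have : Fact N.Prime := ⟨hN⟩
  have hX : Irreducible (X - 1 : ℚ[X]) := by simpa using irreducible_X_sub_C (1 : ℚ)
  have hΦ : Irreducible (∑ n ∈ Finset.range N, X ^ n : ℚ[X]) := by
    rw [← cyclotomic_prime ℚ N]
    exact cyclotomic.irreducible_rat hN.pos
  rw [← geom_sum_mul, IsCoprime.mul_right_iff, isCoprime_comm, hΦ.coprime_iff_not_dvd,
    isCoprime_comm, hX.coprime_iff_not_dvd, and_comm]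

/-- For `N` prime, the rotations of `a ∈ ℤ^N` are linearly independent iff
`a(x)` is divisible neither by `x − 1` nor by `1 + x + ... + x^{N-1}` in `ℚ[x]`. -/
theorem stmt7 (N : ℕ) [NeZero N] (hN : N.Prime) (a : Fin N → ℤ) :
    LinearIndependent ℝ (fun k : Fin N => rotR^[(k : ℕ)] (fun i => (a i : ℝ))) ↔
      (¬ ((X : Polynomial ℚ) - 1 ∣ ∑ n : Fin N, C ((a n : ℚ)) * X ^ (n : ℕ)) ∧
       ¬ ((∑ n ∈ Finset.range N, (X : Polynomial ℚ) ^ n) ∣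
            ∑ n : Fin N, C ((a n : ℚ)) * X ^ (n : ℕ))) := by
  rw [show (rotR : (Fin N → ℝ) → Fin N → ℝ) = cyclicShift from rfl,
    linearIndependent_iterate_cyclicShift_iff, ← isCoprime_X_pow_sub_one_iff_of_prime hN,
    ← isCoprime_map (algebraMap ℚ ℝ)]
  simp [Polynomial.map_sum]
end

section
/- Let N ≥ 2, let l > 10N be an integer, and let k_1,...,k_{N-1} be integers with |k_i| ≥ l for all i. Set b = (1, 1/k_1, ..., 1/k_{N-1}) ∈ ℝ^N. Then for every integer vector (α_1,...,α_N) with max_i |α_i| ≥ 2, the vector c = Σ_{i=1}^N α_i rot^{i-1}(b) satisfies ‖c‖² > ‖b‖². -/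
/-!
Write `c = α ⋆ b` for the cyclic convolution, so `c_j = Σ_i α_i b_{j-i}`. Since `b_0 = 1` and
every other coordinate of `b` is at most `1/l` in size, the coordinate `c_n` at an index where
`|α_n| = A` is maximal differs from `α_n` by at most `(N - 1) A / l ≤ A / 4`. Hence
`‖c‖² ≥ c_n² ≥ (3A/4)² ≥ 9/4`, while `‖b‖² ≤ 1 + (N - 1)/l² < 9/4`.
-/

/-- The rotational shift operator on the Euclidean space `ℝ^N`. -/
def rotE {N : ℕ} [NeZero N] (x : EuclideanSpace ℝ (Fin N)) : EuclideanSpace ℝ (Fin N) :=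
  WithLp.toLp 2 (fun i => x (i - 1))

open Finset

lemma card_sub_one_le_sq (ι : Type*) [Fintype ι] [Nonempty ι] :
    (Fintype.card ι : ℝ) - 1 ≤ ((Fintype.card ι : ℝ) - 1) ^ 2 := by
  rcases Nat.lt_or_ge 1 (Fintype.card ι) with h | h
  · have : (2 : ℝ) ≤ Fintype.card ι := by exact_mod_cast h
    nlinarith
  · rw [show Fintype.card ι = 1 by have := Fintype.card_pos (α := ι); omega]
    norm_num

section CyclicConv

variable {G : Type*} [AddCommGroup G] [Fintype G]

def cyclicConv (a b : G → ℝ) (j : G) : ℝ := ∑ i, a i * b (j - i)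

lemma abs_cyclicConv_sub_le [DecidableEq G] (a b : G → ℝ) {A ε : ℝ} (ha : ∀ i, |a i| ≤ A)
    (hA : 0 ≤ A) (hb₀ : b 0 = 1) (hb : ∀ i ≠ 0, |b i| ≤ ε) (j : G) :
    |cyclicConv a b j - a j| ≤ ((Fintype.card G : ℝ) - 1) * (A * ε) := by
  have hsplit : cyclicConv a b j - a j = ∑ i ∈ univ.erase j, a i * b (j - i) := by
    rw [cyclicConv, ← add_sum_erase _ _ (mem_univ j), sub_self, hb₀, mul_one,
      add_sub_cancel_left]
  have hcard : ((univ.erase j).card : ℝ) = (Fintype.card G : ℝ) - 1 := by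
    rw [card_erase_of_mem (mem_univ j), card_univ,
      Nat.cast_sub (Fintype.card_pos_iff.mpr ⟨j⟩), Nat.cast_one]
  calc |cyclicConv a b j - a j|
      ≤ ∑ i ∈ univ.erase j, |a i * b (j - i)| := hsplit ▸ abs_sum_le_sum_abs _ _
    _ ≤ ∑ _i ∈ univ.erase j, A * ε := by
        refine sum_le_sum fun i hi => ?_
        rw [abs_mul]
        exact mul_le_mul (ha i) (hb _ (sub_ne_zero.mpr (ne_of_mem_erase hi).symm))
          (abs_nonneg _) hA
    _ = ((Fintype.card G : ℝ) - 1) * (A * ε) := by rw [sum_const, nsmul_eq_mul, hcard]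

lemma sum_sq_le_of_abs_le [DecidableEq G] (b : G → ℝ) {ε : ℝ} (hb₀ : b 0 = 1)
    (hb : ∀ i ≠ 0, |b i| ≤ ε) :
    ∑ i, b i ^ 2 ≤ 1 + ((Fintype.card G : ℝ) - 1) * ε ^ 2 := by
  have hcard : ((univ.erase (0 : G)).card : ℝ) = (Fintype.card G : ℝ) - 1 := by
    rw [card_erase_of_mem (mem_univ 0), card_univ, Nat.cast_sub Fintype.card_pos,
      Nat.cast_one]
  rw [← add_sum_erase _ _ (mem_univ 0), hb₀, one_pow, ← hcard, ← nsmul_eq_mul, ← sum_const]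
  gcongr 1 + ∑ i ∈ _, ?_ with i hi
  simpa only [sq_abs] using
    pow_le_pow_left₀ (abs_nonneg _) (hb i (ne_of_mem_erase hi)) 2

theorem sum_sq_lt_sum_sq_cyclicConv (a : G → ℤ) (b : G → ℝ) {ε : ℝ} (hε₀ : 0 ≤ ε)
    (hε : ((Fintype.card G : ℝ) - 1) * ε ≤ 1 / 4) (hb₀ : b 0 = 1) (hb : ∀ i ≠ 0, |b i| ≤ ε)
    (ha : ∃ i, 2 ≤ |a i|) :
    ∑ i, b i ^ 2 < ∑ j, cyclicConv (fun i => (a i : ℝ)) b j ^ 2 := by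
  classical
  set m : ℝ := (Fintype.card G : ℝ) - 1
  set c := cyclicConv (fun i => (a i : ℝ)) b
  obtain ⟨n, hn⟩ := Finite.exists_max fun i => |a i|
  have hmax : ∀ i, |(a i : ℝ)| ≤ |(a n : ℝ)| := fun i => by
    rw [← Int.cast_abs, ← Int.cast_abs]
    exact Int.cast_le.mpr (hn i)
  have hA : 2 ≤ |(a n : ℝ)| := by
    obtain ⟨i, hi⟩ := ha
    rw [← Int.cast_abs]
    exact_mod_cast hi.trans (hn i)
  have hcn : 3 / 2 ≤ |c n| := by
    have hclose : |c n - a n| ≤ m * (|(a n : ℝ)| * ε) :=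
      abs_cyclicConv_sub_le _ b hmax (abs_nonneg _) hb₀ hb n
    have : m * (|(a n : ℝ)| * ε) ≤ |(a n : ℝ)| / 4 := by nlinarith
    have := abs_sub_abs_le_abs_sub (a n : ℝ) (c n)
    rw [abs_sub_comm] at this
    linarith
  have hbsum : ∑ i, b i ^ 2 ≤ 1 + 1 / 16 := by
    have hm : 0 ≤ m := sub_nonneg.mpr (by exact_mod_cast Fintype.card_pos)
    have : m * ε ^ 2 ≤ (m * ε) ^ 2 := by
      rw [mul_pow]; exact mul_le_mul_of_nonneg_right (card_sub_one_le_sq G) (sq_nonneg ε)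
    nlinarith [sum_sq_le_of_abs_le b hb₀ hb, mul_nonneg hm hε₀]
  calc ∑ i, b i ^ 2 < (3 / 2) ^ 2 := by linarith
    _ ≤ c n ^ 2 := by simpa only [sq_abs] using pow_le_pow_left₀ (by norm_num) hcn 2
    _ ≤ ∑ j, c j ^ 2 :=
        single_le_sum (f := fun j => c j ^ 2) (fun j _ => sq_nonneg _) (mem_univ n)

end CyclicConv

section Rotation

variable {N : ℕ} [NeZero N]

open Fin.NatCast in
lemma rotE_iterate_apply (x : EuclideanSpace ℝ (Fin N)) (m : ℕ) (j : Fin N) :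
    (rotE^[m] x) j = x (j - m) := by
  induction m generalizing j with
  | zero => simp
  | succ m ih =>
    rw [Function.iterate_succ_apply']
    change (rotE^[m] x) (j - 1) = _
    rw [ih, Nat.cast_succ, sub_sub, add_comm]

lemma sum_smul_rotE_iterate_apply (a : Fin N → ℝ) (x : EuclideanSpace ℝ (Fin N)) (j : Fin N) :
    (∑ i : Fin N, a i • rotE^[(i : ℕ)] x) j = cyclicConv a x j := by
  simp only [cyclicConv, WithLp.ofLp_sum, WithLp.ofLp_smul, Finset.sum_apply, Pi.smul_apply,
    smul_eq_mul, rotE_iterate_apply, Fin.cast_val_eq_self]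

end Rotation

theorem stmt12_general (N : ℕ) [NeZero N] (l : ℕ) (hl : 10 * N < l)
    (k : Fin N → ℤ) (hk : ∀ i : Fin N, i ≠ 0 → (l : ℤ) ≤ |k i|)
    (b : EuclideanSpace ℝ (Fin N))
    (hb : ∀ i : Fin N, b i = if i = 0 then 1 else ((k i : ℝ))⁻¹)
    (α : Fin N → ℤ) (hα : ∃ i, 2 ≤ |α i|)
    (c : EuclideanSpace ℝ (Fin N))
    (hc : c = ∑ i : Fin N, (α i : ℝ) • rotE^[(i : ℕ)] b) :
    ‖b‖ ^ 2 < ‖c‖ ^ 2 := by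
  have hl' : 10 * (N : ℝ) < l := by exact_mod_cast hl
  have hl₀ : (0 : ℝ) < l := by linarith [(N.cast_nonneg : (0 : ℝ) ≤ N)]
  have hbi : ∀ i ≠ 0, |b i| ≤ (l : ℝ)⁻¹ := fun i hi => by
    have hki : ((l : ℤ) : ℝ) ≤ ((|k i| : ℤ) : ℝ) := Int.cast_le.mpr (hk i hi)
    rw [hb i, if_neg hi, abs_inv]
    exact inv_anti₀ hl₀ (by rwa [Int.cast_abs, Int.cast_natCast] at hki)
  have hε : ((Fintype.card (Fin N) : ℝ) - 1) * (l : ℝ)⁻¹ ≤ 1 / 4 := by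
    rw [Fintype.card_fin, ← div_eq_mul_inv, div_le_iff₀ hl₀]
    linarith
  rw [EuclideanSpace.real_norm_sq_eq, EuclideanSpace.real_norm_sq_eq, hc]
  simp only [sum_smul_rotE_iterate_apply]
  exact sum_sq_lt_sum_sq_cyclicConv α b (inv_nonneg.mpr hl₀.le) hε (by simp [hb]) hbi hα

/-- For `b = (1, 1/k_1, ..., 1/k_{N-1})` with `|k_i| ≥ l > 10N`, any integer combination
`c = Σ α_i rot^{i-1}(b)` with `max |α_i| ≥ 2` satisfies `‖c‖² > ‖b‖²`. -/
theorem stmt12 (N : ℕ) [NeZero N] (hN : 2 ≤ N) (l : ℕ) (hl : 10 * N < l)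
    (k : Fin N → ℤ) (hk : ∀ i : Fin N, i ≠ 0 → (l : ℤ) ≤ |k i|)
    (b : EuclideanSpace ℝ (Fin N))
    (hb : ∀ i : Fin N, b i = if i = 0 then 1 else ((k i : ℝ))⁻¹)
    (α : Fin N → ℤ) (hα : ∃ i, 2 ≤ |α i|)
    (c : EuclideanSpace ℝ (Fin N))
    (hc : c = ∑ i : Fin N, (α i : ℝ) • rotE^[(i : ℕ)] b) :
    ‖b‖ ^ 2 < ‖c‖ ^ 2 :=
  stmt12_general N l hl k hk b hb α hα c hc
end

section
/- Let a = (a_1, a_2) ∈ ℤ² with |a_1| > |a_2| and a_1² + a_2² ≥ 4|a_1 a_2|. Then a and rot(a) = (a_2, a_1) form a Minkowski reduced basis of the lattice Λ(a) they span; in particular, a is a shortest nonzero vector of Λ(a): for all (m,n) ∈ ℤ² \ {0}, ‖m·a + n·rot(a)‖ ≥ ‖a‖. -/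
/-!
Expanding, `‖m a + n rot a‖² = (m² + n²)‖a‖² + 4mn a₁a₂`. The reduction hypothesis bounds the
cross term below by `-|mn| ‖a‖²`, and for integers `(m, n) ≠ 0` one has `m² + n² - |mn| ≥ 1`.
Since `‖rot a‖ = ‖a‖`, the bound for `rot a` is the same statement.
-/

theorem Int.one_add_abs_mul_le_sq_add_sq {m n : ℤ} (h : m ≠ 0 ∨ n ≠ 0) :
    1 + |m * n| ≤ m ^ 2 + n ^ 2 := by
  rw [abs_mul, ← sq_abs m, ← sq_abs n]
  rcases eq_or_ne m 0 with rfl | hm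
  · have := Int.one_le_abs (h.resolve_left (not_not.2 rfl))
    simp only [abs_zero, zero_mul]
    nlinarith
  rcases eq_or_ne n 0 with rfl | hn
  · have := Int.one_le_abs hm
    simp only [abs_zero, mul_zero]
    nlinarith
  nlinarith [Int.one_le_abs hm, Int.one_le_abs hn, sq_nonneg (|m| - |n|)]

theorem sq_add_sq_le_sq_add_sq_of_four_abs_mul_le {R : Type*} [CommRing R] [LinearOrder R]
    [IsStrictOrderedRing R] {a₁ a₂ : R} (hred : 4 * |a₁ * a₂| ≤ a₁ ^ 2 + a₂ ^ 2) {m n : ℤ}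
    (hmn : m ≠ 0 ∨ n ≠ 0) :
    a₁ ^ 2 + a₂ ^ 2 ≤ (m * a₁ + n * a₂) ^ 2 + (m * a₂ + n * a₁) ^ 2 := by
  have hexpand : (m * a₁ + n * a₂) ^ 2 + (m * a₂ + n * a₁) ^ 2
      = ((m : R) ^ 2 + (n : R) ^ 2) * (a₁ ^ 2 + a₂ ^ 2) + (m * n) * (4 * (a₁ * a₂)) := by ring
  have hcoeff : 1 + |(m : R) * n| ≤ (m : R) ^ 2 + (n : R) ^ 2 := by
    exact_mod_cast Int.one_add_abs_mul_le_sq_add_sq hmn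
  have hcross : -(|(m : R) * n| * (a₁ ^ 2 + a₂ ^ 2)) ≤ (m * n) * (4 * (a₁ * a₂)) := by
    calc -(|(m : R) * n| * (a₁ ^ 2 + a₂ ^ 2))
        ≤ -(|(m : R) * n| * (4 * |a₁ * a₂|)) := by gcongr
      _ = -|(m : R) * n * (4 * (a₁ * a₂))| := by
        rw [abs_mul _ (4 * _), abs_mul 4, abs_of_pos (four_pos : (0 : R) < 4)]
      _ ≤ _ := neg_abs_le _
  have hS : 0 ≤ a₁ ^ 2 + a₂ ^ 2 := by positivity
  rw [hexpand]
  nlinarith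

theorem EuclideanSpace.norm_sq_fin_two (x : EuclideanSpace ℝ (Fin 2)) :
    ‖x‖ ^ 2 = x 0 ^ 2 + x 1 ^ 2 := by
  simp [EuclideanSpace.real_norm_sq_eq, Fin.sum_univ_two]

theorem stmt16_general (a₁ a₂ : ℤ) (hred : 4 * |a₁ * a₂| ≤ a₁ ^ 2 + a₂ ^ 2)
    (v w : EuclideanSpace ℝ (Fin 2))
    (hv : v 0 = (a₁ : ℝ) ∧ v 1 = (a₂ : ℝ))
    (hw : w 0 = (a₂ : ℝ) ∧ w 1 = (a₁ : ℝ)) :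
    (∀ m n : ℤ, ¬ (m = 0 ∧ n = 0) → ‖v‖ ≤ ‖(m : ℝ) • v + (n : ℝ) • w‖) ∧
    (∀ m n : ℤ, n ≠ 0 → ‖w‖ ≤ ‖(m : ℝ) • v + (n : ℝ) • w‖) := by
  obtain ⟨hv₀, hv₁⟩ := hv
  obtain ⟨hw₀, hw₁⟩ := hw
  have hredℝ : 4 * |(a₁ : ℝ) * a₂| ≤ (a₁ : ℝ) ^ 2 + (a₂ : ℝ) ^ 2 := by exact_mod_cast hred
  have hshortest (m n : ℤ) (hmn : ¬ (m = 0 ∧ n = 0)) : ‖v‖ ≤ ‖(m : ℝ) • v + (n : ℝ) • w‖ := by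
    refine (sq_le_sq₀ (norm_nonneg _) (norm_nonneg _)).1 ?_
    simp only [EuclideanSpace.norm_sq_fin_two, PiLp.add_apply, PiLp.smul_apply, smul_eq_mul,
      hv₀, hv₁, hw₀, hw₁]
    exact sq_add_sq_le_sq_add_sq_of_four_abs_mul_le hredℝ (not_and_or.1 hmn)
  have hnorm_eq : ‖w‖ = ‖v‖ := by
    rw [← sq_eq_sq₀ (norm_nonneg _) (norm_nonneg _), EuclideanSpace.norm_sq_fin_two,
      EuclideanSpace.norm_sq_fin_two, hv₀, hv₁, hw₀, hw₁, add_comm]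
  exact ⟨hshortest, fun m n hn => hnorm_eq ▸ hshortest m n fun h => hn h.2⟩

/-- For `a = (a_1, a_2) ∈ ℤ²` with `|a_1| > |a_2|` and `a_1² + a_2² ≥ 4|a_1 a_2|`,
the vectors `a` and `rot(a) = (a_2, a_1)` form a Minkowski reduced basis of the lattice
`Λ(a)` they span; in particular `a` is a shortest nonzero vector of `Λ(a)`. -/
theorem stmt16 (a₁ a₂ : ℤ) (hgt : |a₂| < |a₁|) (hred : 4 * |a₁ * a₂| ≤ a₁ ^ 2 + a₂ ^ 2)
    (v w : EuclideanSpace ℝ (Fin 2))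
    (hv : v 0 = (a₁ : ℝ) ∧ v 1 = (a₂ : ℝ))
    (hw : w 0 = (a₂ : ℝ) ∧ w 1 = (a₁ : ℝ)) :
    (∀ m n : ℤ, ¬ (m = 0 ∧ n = 0) → ‖v‖ ≤ ‖(m : ℝ) • v + (n : ℝ) • w‖) ∧
    (∀ m n : ℤ, n ≠ 0 → ‖w‖ ≤ ‖(m : ℝ) • v + (n : ℝ) • w‖) :=
  stmt16_general a₁ a₂ hred v w hv hw
end
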